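/- arXiv:1807.06167 — 2 statements merged into one kernel-verified Lean document; each statement's English description precedes it below -/
import Mathlib

section
/- Let (Ω, F, P) be a probability space, (H_n)_{n≥1} a decreasing sequence of sub-σ-fields, and A an event such that for every n, A belongs to the P-completion of H_n. Then P(A | ⋂_n H_n) = 𝟙_A almost surely; in particular, A belongs to the P-completion of the tail σ-field ⋂_n H_n. -/
open MeasureTheory Filter

/-!
If `A` is `μ`-a.e. equal to some `Bₙ ∈ Hₙ` for every `n`, then `A` is also a.e. equal to
`limsup Bₙ`, which lies in every `Hₖ` since it only depends on the tail `(Bₙ)_{n ≥ k}` and the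
`Hₙ` decrease. So `A` is a.e. equal to a set of `⋂ₙ Hₙ`, whose indicator is its own conditional
expectation.
-/

section

variable {Ω : Type*}

theorem MeasurableSpace.measurableSet_limsup_iInf_of_antitone {H : ℕ → MeasurableSpace Ω}
    (hH : Antitone H) {s : ℕ → Set Ω} (hs : ∀ n, MeasurableSet[H n] (s n)) :
    MeasurableSet[⨅ n, H n] (limsup (α := Set Ω) s atTop) := by
  refine MeasurableSpace.measurableSet_iInf.2 fun k => ?_
  rw [← limsup_nat_add s k, limsup_eq_iInf_iSup_of_nat']
  exact .iInter fun n => .iUnion fun i => hH (by omega : k ≤ i + n + k) _ (hs _)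

theorem exists_measurableSet_iInf_ae_eq_of_antitone [MeasurableSpace Ω] {μ : Measure Ω}
    {H : ℕ → MeasurableSpace Ω} (hH : Antitone H) {A : Set Ω}
    (hA : ∀ n, ∃ B, MeasurableSet[H n] B ∧ B =ᵐ[μ] A) :
    ∃ B, MeasurableSet[⨅ n, H n] B ∧ B =ᵐ[μ] A := by
  choose B hB hBA using hA
  exact ⟨limsup (α := Set Ω) B atTop, MeasurableSpace.measurableSet_limsup_iInf_of_antitone hH hB,
    limsup_ae_eq_of_forall_ae_eq B hBA⟩

theorem condExp_indicator_const_ae_eq_of_ae_eq_measurableSet {E : Type*} [NormedAddCommGroup E]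
    [NormedSpace ℝ E] [CompleteSpace E] {m m₀ : MeasurableSpace Ω} {μ : Measure Ω}
    [IsFiniteMeasure μ] (hm : m ≤ m₀) {A B : Set Ω} (hB : MeasurableSet[m] B) (hBA : B =ᵐ[μ] A)
    (c : E) : μ[A.indicator (fun _ => c) | m] =ᵐ[μ] A.indicator fun _ => c := by
  have hind : B.indicator (fun _ => c) =ᵐ[μ] A.indicator fun _ => c :=
    indicator_ae_eq_of_ae_eq_set hBA
  refine condExp_of_aestronglyMeasurable' hm
    ⟨_, stronglyMeasurable_const.indicator hB, hind.symm⟩ ?_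
  exact ((integrable_const c).indicator (hm _ hB)).congr hind

end

theorem stmt8_general
    {Ω : Type*} {F : MeasurableSpace Ω} (P : Measure Ω) [IsProbabilityMeasure P]
    (H : ℕ → MeasurableSpace Ω) (hle : ∀ n, H n ≤ F) (hanti : Antitone H)
    (A : Set Ω)
    (hcompl : ∀ n, ∃ B : Set Ω, MeasurableSet[H n] B ∧ P (symmDiff A B) = 0) :
    (P[A.indicator (fun _ => (1 : ℝ)) | ⨅ n, H n]
        =ᵐ[P] A.indicator fun _ => (1 : ℝ)) ∧
    ∃ B : Set Ω, MeasurableSet[⨅ n, H n] B ∧ P (symmDiff A B) = 0 := by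
  have hae : ∀ n, ∃ B, MeasurableSet[H n] B ∧ B =ᵐ[P] A := fun n => by
    obtain ⟨B, hB, hAB⟩ := hcompl n
    exact ⟨B, hB, (measure_symmDiff_eq_zero_iff.1 hAB).symm⟩
  obtain ⟨B, hB, hBA⟩ := exists_measurableSet_iInf_ae_eq_of_antitone hanti hae
  have hm : (⨅ n, H n) ≤ F := (iInf_le H 0).trans (hle 0)
  exact ⟨condExp_indicator_const_ae_eq_of_ae_eq_measurableSet hm hB hBA 1,
    B, hB, measure_symmDiff_eq_zero_iff.2 hBA.symm⟩

/-- Lévy's downward theorem application: if `(H n)` is a decreasing sequence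
of sub-σ-fields and the event `A` belongs to the `P`-completion of each `H n`, then
`P(A | ⋂ n, H n) = 𝟙_A` a.s.; in particular `A` belongs to the `P`-completion of the tail
σ-field `⋂ n, H n`. -/
theorem stmt8
    {Ω : Type*} {F : MeasurableSpace Ω} (P : Measure Ω) [IsProbabilityMeasure P]
    (H : ℕ → MeasurableSpace Ω) (hle : ∀ n, H n ≤ F) (hanti : Antitone H)
    (A : Set Ω) (hA : MeasurableSet A)
    (hcompl : ∀ n, ∃ B : Set Ω, MeasurableSet[H n] B ∧ P (symmDiff A B) = 0) :
    (P[A.indicator (fun _ => (1 : ℝ)) | ⨅ n, H n]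
        =ᵐ[P] A.indicator fun _ => (1 : ℝ)) ∧
    ∃ B : Set Ω, MeasurableSet[⨅ n, H n] B ∧ P (symmDiff A B) = 0 :=
  stmt8_general P H hle hanti A hcompl
end

section
/- Let (Ω, F, P) be a probability space, A ∈ F an event, and for each n a sub-σ-field G_n such that P(A | G_n) → 𝟙_A in L¹. Then for each k ≥ 1, A belongs to the P-completion of the σ-field ⋁_{n ≥ k} G_n generated by the union of the G_n for n ≥ k. -/
/-!
Convergence in `L¹` gives a subsequence of the conditional expectations `P[𝟙_A | G n]`,
`n ≥ k`, converging almost surely to `𝟙_A`. Each term is measurable for `⋁_{n ≥ k} G n`,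
hence so is the set where the subsequence converges to `1`, and that set agrees with `A`
up to a null set.
-/

open MeasureTheory Filter Topology

namespace MeasureTheory

variable {Ω : Type*} {m m₀ : MeasurableSpace Ω} {μ : Measure[m₀] Ω} {A : Set Ω}

theorem exists_measurableSet_ae_eq_of_ae_tendsto_indicator {β : Type*} [TopologicalSpace β]
    [T2Space β] [FirstCountableTopology β] [MeasurableSpace β] [OpensMeasurableSpace β]
    [Zero β] {c : β} (hc : c ≠ 0) {f : ℕ → Ω → β} (hf : ∀ n, Measurable[m] (f n))
    (hlim : ∀ᵐ ω ∂μ, Tendsto (fun n => f n ω) atTop (𝓝 (A.indicator (fun _ => c) ω))) :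
    ∃ B, MeasurableSet[m] B ∧ B =ᵐ[μ] A := by
  refine ⟨{ω | Tendsto (fun n => f n ω) atTop (𝓝 c)}, measurableSet_tendsto _ hf, ?_⟩
  filter_upwards [hlim] with ω hω
  refine propext (show Tendsto (fun n => f n ω) atTop (𝓝 c) ↔ ω ∈ A from ?_)
  by_cases hωA : ω ∈ A
  · simpa [hωA] using hω
  · rw [Set.indicator_of_notMem hωA] at hω
    simpa [hωA] using fun hωc => hc (tendsto_nhds_unique hωc hω)

theorem exists_measurableSet_ae_eq_of_tendsto_eLpNorm_condExp_indicator {E : Type*}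
    [NormedAddCommGroup E] [NormedSpace ℝ E] [CompleteSpace E] [MeasurableSpace E]
    [BorelSpace E] {c : E} (hc : c ≠ 0) {p : ENNReal} (hp : p ≠ 0)
    {G : ℕ → MeasurableSpace Ω} (hG : ∀ n, G n ≤ m) (hA : MeasurableSet A)
    (hconv : Tendsto (fun n => eLpNorm (μ[A.indicator (fun _ => c) | G n]
      - A.indicator fun _ => c) p μ) atTop (𝓝 0)) :
    ∃ B, MeasurableSet[m] B ∧ B =ᵐ[μ] A := by
  have hmeas : TendstoInMeasure μ (fun n => μ[A.indicator (fun _ => c) | G n]) atTop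
      (A.indicator fun _ => c) :=
    tendstoInMeasure_of_tendsto_eLpNorm hp (fun _ => integrable_condExp.aestronglyMeasurable)
      (stronglyMeasurable_const.indicator hA).aestronglyMeasurable hconv
  obtain ⟨ns, -, hlim⟩ := hmeas.exists_seq_tendsto_ae
  exact exists_measurableSet_ae_eq_of_ae_tendsto_indicator hc
    (fun n => (stronglyMeasurable_condExp.mono (hG (ns n))).measurable) hlim

end MeasureTheory

theorem stmt10_general
    {Ω : Type*} {F : MeasurableSpace Ω} (P : Measure Ω)
    (G : ℕ → MeasurableSpace Ω)
    (A : Set Ω) (hA : MeasurableSet A)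
    (hconv : Tendsto (fun n => eLpNorm ((P[A.indicator (fun _ => (1 : ℝ)) | G n])
        - A.indicator fun _ => (1 : ℝ)) 1 P) atTop (nhds 0)) :
    ∀ k : ℕ, ∃ B : Set Ω, MeasurableSet[⨆ n, ⨆ _ : k ≤ n, G n] B ∧ P (symmDiff A B) = 0 := by
  intro k
  have hG_le : ∀ n, G (n + k) ≤ ⨆ n, ⨆ _ : k ≤ n, G n := fun n =>
    le_iSup₂ (f := fun n (_ : k ≤ n) => G n) (n + k) (Nat.le_add_left k n)
  obtain ⟨B, hB, hBA⟩ := exists_measurableSet_ae_eq_of_tendsto_eLpNorm_condExp_indicator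
    one_ne_zero one_ne_zero hG_le hA (hconv.comp (tendsto_add_atTop_nat k))
  exact ⟨B, hB, measure_symmDiff_eq_zero_iff.2 hBA.symm⟩

/-- if `P(A | G n) → 𝟙_A` in `L¹`, then for each `k`, the event `A` belongs
to the `P`-completion of the σ-field `⋁_{n ≥ k} G n`. -/
theorem stmt10
    {Ω : Type*} {F : MeasurableSpace Ω} (P : Measure Ω) [IsProbabilityMeasure P]
    (G : ℕ → MeasurableSpace Ω) (hle : ∀ n, G n ≤ F)
    (A : Set Ω) (hA : MeasurableSet A)
    (hconv : Tendsto (fun n => eLpNorm ((P[A.indicator (fun _ => (1 : ℝ)) | G n])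
        - A.indicator fun _ => (1 : ℝ)) 1 P) atTop (nhds 0)) :
    ∀ k : ℕ, ∃ B : Set Ω, MeasurableSet[⨆ n, ⨆ _ : k ≤ n, G n] B ∧ P (symmDiff A B) = 0 :=
  stmt10_general (F := F) P G A hA hconv
end
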